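/- If a Smale space $(X,\phi)$ is irreducible and $X$ is infinite, then $(X,\phi)$ is $(s,u)$-essentially free: for every $(p,q) \in \mathbb{Z}^2$ with $(p,q) \neq (0,0)$, the interior of the set $\{x \in X \mid (\phi^p(x),x) \in G_\phi^s \text{ and } (\phi^q(x),x) \in G_\phi^u\}$ is empty. -/

import Mathlib

open scoped Topology

/-- A Smale space: a compact metric space `X` with a homeomorphism `phi`, constants
`eps0 > 0`, `0 < lam0 < 1`, and a bracket map satisfying (SS1) and (SS2). -/
structure SmaleSpace (X : Type*) [MetricSpace X] [CompactSpace X] where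
  phi : X ≃ₜ X
  eps0 : ℝ
  eps0_pos : 0 < eps0
  lam0 : ℝ
  lam0_pos : 0 < lam0
  lam0_lt_one : lam0 < 1
  br : X → X → X
  br_continuousOn :
    ContinuousOn (fun p : X × X => br p.1 p.2) {p : X × X | dist p.1 p.2 < eps0}
  br_self : ∀ x, br x x = x
  br_assoc₁ : ∀ x y z, dist x y < eps0 → dist y z < eps0 → dist x z < eps0 →
      dist (br x y) z < eps0 → dist x (br y z) < eps0 →
      br (br x y) z = br x z
  br_assoc₂ : ∀ x y z, dist x y < eps0 → dist y z < eps0 → dist x z < eps0 →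
      dist (br x y) z < eps0 → dist x (br y z) < eps0 →
      br x (br y z) = br x z
  br_phi : ∀ x y, dist x y < eps0 → dist (phi x) (phi y) < eps0 →
      br (phi x) (phi y) = phi (br x y)
  contract_s : ∀ x, ∀ ε : ℝ, 0 < ε → ε ≤ eps0 → ∀ y z,
      br y x = y → dist x y < ε → br z x = z → dist x z < ε →
      dist (phi y) (phi z) ≤ lam0 * dist y z
  contract_u : ∀ x, ∀ ε : ℝ, 0 < ε → ε ≤ eps0 → ∀ y z,
      br x y = y → dist x y < ε → br x z = z → dist x z < ε →
      dist (phi.symm y) (phi.symm z) ≤ lam0 * dist y z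

namespace SmaleSpace

variable {X : Type*} [MetricSpace X] [CompactSpace X] (S : SmaleSpace X)

/-- the `n`-th power `φ^n` of the homeomorphism, `n ∈ ℤ`. -/
def zp (n : ℤ) (x : X) : X := (S.phi.toEquiv ^ n) x

/-- local stable set `X^s(x, ε)`. -/
def stableSet (x : X) (ε : ℝ) : Set X := {y | S.br y x = y ∧ dist x y < ε}

/-- local unstable set `X^u(x, ε)`. -/
def unstableSet (x : X) (ε : ℝ) : Set X := {y | S.br x y = y ∧ dist x y < ε}

def Gs0 : Set (X × X) := {p | p.2 ∈ S.stableSet p.1 S.eps0}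

def Gu0 : Set (X × X) := {p | p.2 ∈ S.unstableSet p.1 S.eps0}

def GsN (n : ℕ) : Set (X × X) := {p | (S.zp n p.1, S.zp n p.2) ∈ S.Gs0}

def GuN (n : ℕ) : Set (X × X) := {p | (S.zp (-(n : ℤ)) p.1, S.zp (-(n : ℤ)) p.2) ∈ S.Gu0}

def GaN (n : ℕ) : Set (X × X) := S.GsN n ∩ S.GuN n

/-- the stable equivalence relation `G_φ^s`. -/
def Gs : Set (X × X) :=
  {p | Filter.Tendsto (fun n : ℕ => dist (S.zp n p.1) (S.zp n p.2)) Filter.atTop (𝓝 0)}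

/-- the unstable equivalence relation `G_φ^u`. -/
def Gu : Set (X × X) :=
  {p | Filter.Tendsto (fun n : ℕ => dist (S.zp (-(n : ℤ)) p.1) (S.zp (-(n : ℤ)) p.2))
        Filter.atTop (𝓝 0)}

/-- the asymptotic equivalence relation `G_φ^a`. -/
def Ga : Set (X × X) := S.Gs ∩ S.Gu

/-- irreducibility of a Smale space. -/
def Irred : Prop := ∀ U V : Set X, IsOpen U → IsOpen V → U.Nonempty → V.Nonempty →
  ∃ K : ℕ, (S.zp K '' U ∩ V).Nonempty

end SmaleSpace

/-- the cocycle sums `f^n` of a function `f : X → ℤ` along a bijection `φ`. -/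
def birkhoff {X : Type*} (φ : Equiv.Perm X) (f : X → ℤ) (n : ℤ) (x : X) : ℤ :=
  if 0 ≤ n then ∑ i ∈ Finset.range n.toNat, f ((φ ^ (i : ℤ)) x)
  else -∑ i ∈ Finset.range (-n).toNat, f ((φ ^ (n + (i : ℤ))) x)


/-!
For `p ≠ 0` it suffices to show that `{x | (φ^p x, x) ∈ G^s}` has empty interior: the `G^u`
condition is the same one for the Smale space `(X, φ⁻¹)`, and `p < 0` reduces to `-p`.
Suppose this set contains a nonempty open set. By Baire's theorem, on a smaller open set the
orbits of `x` and `φ^p x` stay uniformly close from some time `m` on. Irreducibility moves such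
an orbit into any given ball, where `φ^p x` then lies on the local stable set of `x`; since `φ^p`
contracts that set, the `φ^p`-orbit of `x` converges to a nearby fixed point of `φ^p`. So the
fixed points of `φ^p` are dense, hence everything. But if `φ^p = id`, the bracket of two close
points is a fixed point on the stable set of one and the unstable set of the other, so it equals
both: `X` is discrete, hence finite.
-/

theorem exists_isOpen_subset_iInter_of_eventually_mem {X : Type*} [TopologicalSpace X]
    [BaireSpace X] {s : ℕ → Set X} (hs : ∀ n, IsClosed (s n)) {U : Set X} (hU : IsOpen U)
    (hne : U.Nonempty) (h : ∀ x ∈ U, ∀ᶠ n in Filter.atTop, x ∈ s n) :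
    ∃ V, IsOpen V ∧ V.Nonempty ∧ V ⊆ U ∧ ∃ m, ∀ x ∈ V, ∀ n ≥ m, x ∈ s n := by
  set C : ℕ → Set X := fun m => (⋂ n ≥ m, s n) ∪ Uᶜ
  have hC : ∀ m, IsClosed (C m) := fun m =>
    (isClosed_biInter fun n _ => hs n).union hU.isClosed_compl
  have hcover : ⋃ m, C m = Set.univ := Set.eq_univ_of_forall fun x => by
    by_cases hx : x ∈ U
    · obtain ⟨m, hm⟩ := Filter.eventually_atTop.mp (h x hx)
      exact Set.mem_iUnion.mpr ⟨m, Or.inl (Set.mem_iInter₂.mpr hm)⟩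
    · exact Set.mem_iUnion.mpr ⟨0, Or.inr hx⟩
  obtain ⟨y, hy, hyU⟩ := (dense_iUnion_interior_of_closed hC hcover).exists_mem_open hU hne
  obtain ⟨m, hm⟩ := Set.mem_iUnion.mp hy
  refine ⟨U ∩ interior (C m), hU.inter isOpen_interior, ⟨y, hyU, hm⟩, Set.inter_subset_left,
    m, fun x ⟨hxU, hxC⟩ n hn => ?_⟩
  rcases interior_subset hxC with hx | hx
  · exact Set.mem_iInter₂.mp hx n hn
  · exact absurd hxU hx

namespace SmaleSpace

open Filter Metric

variable {X : Type*} [MetricSpace X] [CompactSpace X] (S : SmaleSpace X)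

theorem zp_eq_coe_zpow (n : ℤ) : S.zp n = ⇑(S.phi ^ n) := by
  let toPerm : (X ≃ₜ X) →* Equiv.Perm X :=
    { toFun := Homeomorph.toEquiv, map_one' := rfl, map_mul' := fun _ _ => rfl }
  funext x
  exact congrArg (· x) (map_zpow toPerm S.phi n).symm

theorem zp_zero (x : X) : S.zp 0 x = x := rfl

theorem zp_add (m n : ℤ) (x : X) : S.zp (m + n) x = S.zp m (S.zp n x) := by
  simp [zp_eq_coe_zpow, zpow_add]

theorem zp_natCast_succ (n : ℕ) (x : X) : S.zp ((n + 1 : ℕ) : ℤ) x = S.phi (S.zp n x) := by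
  rw [Nat.cast_succ, add_comm, zp_add]
  simp [zp_eq_coe_zpow]

theorem zp_neg_zp (n : ℤ) (x : X) : S.zp (-n) (S.zp n x) = x := by
  rw [← zp_add, neg_add_cancel, zp_zero]

theorem zp_zp_neg (n : ℤ) (x : X) : S.zp n (S.zp (-n) x) = x := by
  simpa using S.zp_neg_zp (-n) x

theorem continuous_zp (n : ℤ) : Continuous (S.zp n) := by
  rw [zp_eq_coe_zpow]
  exact (S.phi ^ n).continuous

theorem isOpenMap_zp (n : ℤ) : IsOpenMap (S.zp n) := by
  rw [zp_eq_coe_zpow]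
  exact (S.phi ^ n).isOpenMap

theorem br_phi_symm (x y : X) (h : dist x y < S.eps0)
    (h' : dist (S.phi.symm x) (S.phi.symm y) < S.eps0) :
    S.br (S.phi.symm x) (S.phi.symm y) = S.phi.symm (S.br x y) := by
  have := S.br_phi (S.phi.symm x) (S.phi.symm y) h' (by simpa using h)
  simp only [Homeomorph.apply_symm_apply] at this
  rw [this, Homeomorph.symm_apply_apply]

def inv : SmaleSpace X where
  phi := S.phi.symm
  eps0 := S.eps0
  eps0_pos := S.eps0_pos
  lam0 := S.lam0
  lam0_pos := S.lam0_pos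
  lam0_lt_one := S.lam0_lt_one
  br x y := S.br y x
  br_continuousOn := S.br_continuousOn.comp continuous_swap.continuousOn
    fun q hq => by simpa [dist_comm] using hq
  br_self := S.br_self
  br_assoc₁ x y z h₁ h₂ h₃ h₄ h₅ := S.br_assoc₂ z y x (by rwa [dist_comm])
    (by rwa [dist_comm]) (by rwa [dist_comm]) (by rwa [dist_comm]) (by rwa [dist_comm])
  br_assoc₂ x y z h₁ h₂ h₃ h₄ h₅ := S.br_assoc₁ z y x (by rwa [dist_comm])
    (by rwa [dist_comm]) (by rwa [dist_comm]) (by rwa [dist_comm]) (by rwa [dist_comm])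
  br_phi x y h h' := S.br_phi_symm y x (by rwa [dist_comm]) (by rwa [dist_comm])
  contract_s := S.contract_u
  contract_u x ε hε hεe y z := by simpa using S.contract_s x ε hε hεe y z

theorem inv_zp (n : ℤ) (x : X) : S.inv.zp n x = S.zp (-n) x := by
  show (S.phi.toEquiv⁻¹ ^ n) x = (S.phi.toEquiv ^ (-n)) x
  rw [inv_zpow, zpow_neg]

theorem inv_Gs : S.inv.Gs = S.Gu := by
  ext
  simp only [Gs, Gu, Set.mem_ofPred_eq, inv_zp]

theorem phi_mem_stableSet {x y : X} (hy : y ∈ S.stableSet x S.eps0)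
    (h : dist (S.phi x) (S.phi y) < S.eps0) : S.phi y ∈ S.stableSet (S.phi x) S.eps0 := by
  refine ⟨?_, h⟩
  rw [S.br_phi y x (by rw [dist_comm]; exact hy.2) (by rwa [dist_comm]), hy.1]

theorem phi_mem_unstableSet {x y : X} (hy : y ∈ S.unstableSet x S.eps0)
    (h : dist (S.phi x) (S.phi y) < S.eps0) :
    S.phi y ∈ S.unstableSet (S.phi x) S.eps0 :=
  ⟨by rw [S.br_phi x y hy.2 h, hy.1], h⟩

theorem dist_phi_le_of_mem_stableSet {x y : X} (hy : y ∈ S.stableSet x S.eps0) :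
    dist (S.phi x) (S.phi y) ≤ S.lam0 * dist x y := by
  have := S.contract_s x S.eps0 S.eps0_pos le_rfl y x hy.1 hy.2 (S.br_self x)
    (by simpa using S.eps0_pos)
  rwa [dist_comm, dist_comm y] at this

theorem dist_zp_le_of_mem_stableSet {x y : X} (hy : y ∈ S.stableSet x S.eps0) (n : ℕ) :
    dist (S.zp n x) (S.zp n y) ≤ S.lam0 ^ n * dist x y := by
  suffices ∀ n : ℕ, S.zp n y ∈ S.stableSet (S.zp n x) S.eps0 ∧
      dist (S.zp n x) (S.zp n y) ≤ S.lam0 ^ n * dist x y from (this n).2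
  intro n
  induction n with
  | zero => simpa [zp_zero] using hy
  | succ n ih =>
    have hle :
        dist (S.zp (n + 1 : ℕ) x) (S.zp (n + 1 : ℕ) y) ≤ S.lam0 ^ (n + 1) * dist x y := by
      rw [zp_natCast_succ, zp_natCast_succ, pow_succ', mul_assoc]
      exact (S.dist_phi_le_of_mem_stableSet ih.1).trans
        (mul_le_mul_of_nonneg_left ih.2 S.lam0_pos.le)
    have hlt : S.lam0 ^ (n + 1) * dist x y < S.eps0 :=
      (mul_le_of_le_one_left dist_nonneg (pow_le_one₀ S.lam0_pos.le S.lam0_lt_one.le)).trans_lt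
        hy.2
    refine ⟨?_, hle⟩
    rw [zp_natCast_succ, zp_natCast_succ] at hle ⊢
    exact S.phi_mem_stableSet ih.1 (hle.trans_lt hlt)

theorem dist_zp_neg_le_of_mem_unstableSet {x y : X} (hy : y ∈ S.unstableSet x S.eps0)
    (n : ℕ) : dist (S.zp (-n) x) (S.zp (-n) y) ≤ S.lam0 ^ n * dist x y := by
  have h := S.inv.dist_zp_le_of_mem_stableSet hy n
  simp only [inv_zp] at h
  exact h

theorem eq_of_mem_unstableSet_of_forall_dist_zp_le {x y : X}
    (hy : y ∈ S.unstableSet x S.eps0) {c : ℝ} (hc : c < S.eps0)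
    (h : ∀ n : ℕ, dist (S.zp n x) (S.zp n y) ≤ c) : x = y := by
  have hmem : ∀ n : ℕ, S.zp n y ∈ S.unstableSet (S.zp n x) S.eps0 := by
    intro n
    induction n with
    | zero => simpa [zp_zero] using hy
    | succ n ih =>
      have hlt := (h (n + 1)).trans_lt hc
      rw [zp_natCast_succ, zp_natCast_succ] at hlt ⊢
      exact S.phi_mem_unstableSet ih hlt
  have hle : ∀ n : ℕ, dist x y ≤ S.lam0 ^ n * c := fun n => by
    simpa only [zp_neg_zp] using (S.dist_zp_neg_le_of_mem_unstableSet (hmem n) n).trans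
      (mul_le_mul_of_nonneg_left (h n) (pow_nonneg S.lam0_pos.le n))
  have hlim : Tendsto (fun n : ℕ => S.lam0 ^ n * c) atTop (𝓝 0) := by
    simpa using (tendsto_pow_atTop_nhds_zero_of_lt_one S.lam0_pos.le S.lam0_lt_one).mul_const c
  exact dist_le_zero.mp (ge_of_tendsto' hlim hle)

theorem exists_dist_br_lt {ε : ℝ} (hε : 0 < ε) :
    ∃ δ > 0, ∀ a b : X, dist a b < δ → dist (S.br a b) a < ε := by
  have hK : IsCompact {q : X × X | dist q.1 q.2 ≤ S.eps0 / 2} :=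
    (isClosed_le continuous_dist continuous_const).isCompact
  have hcont := S.br_continuousOn.mono fun q (hq : dist q.1 q.2 ≤ S.eps0 / 2) =>
    hq.trans_lt (half_lt_self S.eps0_pos)
  obtain ⟨δ, hδ, H⟩ :=
    Metric.uniformContinuousOn_iff.mp (hK.uniformContinuousOn_of_continuous hcont) ε hε
  refine ⟨min δ (S.eps0 / 2), lt_min hδ (half_pos S.eps0_pos), fun a b hab => ?_⟩
  have hab' : dist a b ≤ S.eps0 / 2 := (hab.trans_le (min_le_right _ _)).le
  have hclose : dist (a, b) (a, a) < δ := by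
    rw [Prod.dist_eq, dist_self, dist_comm]
    exact max_lt hδ (hab.trans_le (min_le_left _ _))
  simpa [S.br_self] using H (a, b) hab' (a, a) (by simpa using (half_pos S.eps0_pos).le) hclose

theorem exists_br_mem_stableSet_unstableSet {ε : ℝ} (hε : 0 < ε) :
    ∃ δ > 0, ∀ a b : X, dist a b < δ →
      S.br a b ∈ S.stableSet b ε ∧ S.br a b ∈ S.unstableSet a ε := by
  set η := min ε S.eps0 / 2 with hη
  have hη0 : 0 < η := half_pos (lt_min hε S.eps0_pos)
  have hηε : 2 * η ≤ ε := by rw [hη]; linarith [min_le_left ε S.eps0]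
  have hηe : 2 * η ≤ S.eps0 := by rw [hη]; linarith [min_le_right ε S.eps0]
  obtain ⟨δ, hδ, hbr⟩ := S.exists_dist_br_lt hη0
  refine ⟨min δ η, lt_min hδ hη0, fun a b hab => ?_⟩
  have hab₁ : dist a b < η := hab.trans_le (min_le_right _ _)
  have hwa : dist (S.br a b) a < η := hbr a b (hab.trans_le (min_le_left _ _))
  have hwb : dist (S.br a b) b < 2 * η := by
    linarith [dist_triangle (S.br a b) a b]
  have hab₂ : dist a b < S.eps0 := by linarith
  have hb : dist b b < S.eps0 := by simpa using S.eps0_pos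
  have ha : dist a a < S.eps0 := by simpa using S.eps0_pos
  refine ⟨⟨?_, by rw [dist_comm]; linarith⟩, ⟨?_, by rw [dist_comm]; linarith⟩⟩
  · exact S.br_assoc₁ a b b hab₂ hb hab₂ (by linarith) (by rwa [S.br_self])
  · exact S.br_assoc₂ a a b ha hab₂ hab₂ (by rwa [S.br_self]) (by rw [dist_comm]; linarith)

theorem exists_mem_stableSet_of_forall_dist_zp_le :
    ∃ δ > 0, ∀ a b : X, dist a b < δ →
      (∀ n : ℕ, dist (S.zp n a) (S.zp n b) ≤ S.eps0 / 2) → b ∈ S.stableSet a S.eps0 := by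
  obtain ⟨δ, hδ, hprod⟩ :=
    S.exists_br_mem_stableSet_unstableSet (by linarith [S.eps0_pos] : 0 < S.eps0 / 4)
  refine ⟨δ, hδ, fun a b hab h => ?_⟩
  obtain ⟨hs, hu⟩ := hprod b a (by rwa [dist_comm])
  have he : S.eps0 / 4 < S.eps0 := by linarith [S.eps0_pos]
  have hs' : S.br b a ∈ S.stableSet a S.eps0 := ⟨hs.1, hs.2.trans he⟩
  have hu' : S.br b a ∈ S.unstableSet b S.eps0 := ⟨hu.1, hu.2.trans he⟩
  -- `[b, a]` is forward asymptotic to `a`, so its orbit stays near that of `b`, and it lies on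
  -- the local unstable set of `b`.
  have hclose : ∀ n : ℕ, dist (S.zp n b) (S.zp n (S.br b a)) ≤ 3 * S.eps0 / 4 := fun n =>
    calc dist (S.zp n b) (S.zp n (S.br b a))
        ≤ dist (S.zp n a) (S.zp n b) + dist (S.zp n a) (S.zp n (S.br b a)) :=
          dist_triangle_left _ _ _
      _ ≤ S.eps0 / 2 + 1 * (S.eps0 / 4) := by
          gcongr
          · exact h n
          · exact (S.dist_zp_le_of_mem_stableSet hs' n).trans (mul_le_mul
              (pow_le_one₀ S.lam0_pos.le S.lam0_lt_one.le) hs.2.le dist_nonneg zero_le_one)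
      _ = 3 * S.eps0 / 4 := by ring
  rw [S.eq_of_mem_unstableSet_of_forall_dist_zp_le hu' (by linarith [S.eps0_pos]) hclose]
  exact hs'

theorem eq_of_mem_stableSet_of_zp_eq_self {p : ℕ} (hp : 0 < p) {x y : X}
    (hy : y ∈ S.stableSet x S.eps0) (hx : S.zp p x = x) (hy' : S.zp p y = y) : x = y := by
  have h := S.dist_zp_le_of_mem_stableSet hy p
  rw [hx, hy'] at h
  have hlt : S.lam0 ^ p < 1 := pow_lt_one₀ S.lam0_pos.le S.lam0_lt_one hp.ne'
  exact dist_le_zero.mp (by nlinarith [dist_nonneg (x := x) (y := y)])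

theorem finite_of_forall_zp_eq_self {p : ℕ} (hp : 0 < p) (h : ∀ x, S.zp p x = x) :
    Finite X := by
  obtain ⟨δ, hδ, hprod⟩ := S.exists_br_mem_stableSet_unstableSet S.eps0_pos
  have hinv : ∀ x, S.inv.zp p x = x := fun x => by
    rw [inv_zp, ← h x, zp_neg_zp, h]
  have : DiscreteTopology X := .of_forall_le_dist hδ fun x y hxy => by
    by_contra! hlt
    -- `[x, y]` is fixed by `φ^p` and lies on the local unstable set of `x` and the local stable
    -- set of `y`, so it equals both.
    obtain ⟨hs, hu⟩ := hprod x y hlt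
    exact hxy ((S.inv.eq_of_mem_stableSet_of_zp_eq_self hp hu (hinv x) (hinv _)).trans
      (S.eq_of_mem_stableSet_of_zp_eq_self hp hs (h y) (h _)).symm)
  exact finite_of_compact_of_discrete

-- `z` is the limit of `φ^(kp) x`, a Cauchy sequence since `φ` contracts the stable set of `x`.
theorem exists_zp_eq_self_dist_le {p : ℕ} (hp : 0 < p) {x : X}
    (hx : S.zp p x ∈ S.stableSet x S.eps0) :
    ∃ z, S.zp p z = z ∧ dist x z ≤ dist x (S.zp p x) / (1 - S.lam0) := by
  set u : ℕ → X := fun k => S.zp (k * p : ℕ) x with hu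
  have hu_succ : ∀ k, u (k + 1) = S.zp (k * p : ℕ) (S.zp p x) := fun k => by
    simp only [hu, ← zp_add]; congr 1; push_cast; ring
  have hu_succ' : ∀ k, u (k + 1) = S.zp p (u k) := fun k => by
    simp only [hu, ← zp_add]; congr 1; push_cast; ring
  have hdist : ∀ k, dist (u k) (u (k + 1)) ≤ dist x (S.zp p x) * S.lam0 ^ k := fun k => by
    rw [hu_succ, mul_comm (dist _ _)]
    refine (S.dist_zp_le_of_mem_stableSet hx _).trans
      (mul_le_mul_of_nonneg_right ?_ dist_nonneg)
    exact pow_le_pow_of_le_one S.lam0_pos.le S.lam0_lt_one.le (Nat.le_mul_of_pos_right k hp)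
  obtain ⟨z, hz⟩ :=
    cauchySeq_tendsto_of_complete (cauchySeq_of_le_geometric _ _ S.lam0_lt_one hdist)
  refine ⟨z, tendsto_nhds_unique ?_ (hz.comp (tendsto_add_atTop_nat 1)), ?_⟩
  · simpa only [Function.comp_def, hu_succ'] using ((S.continuous_zp p).tendsto z).comp hz
  · simpa [hu, zp_zero] using dist_le_of_le_geometric_of_tendsto₀ _ _ S.lam0_lt_one hdist hz

theorem exists_zp_eq_self_dist_lt_of_forall_dist_zp_le {p : ℕ} (hp : 0 < p) {ε : ℝ}
    (hε : 0 < ε) :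
    ∃ δ > 0, ∀ x : X, (∀ n : ℕ, dist (S.zp n (S.zp p x)) (S.zp n x) ≤ δ) →
      ∃ z, S.zp p z = z ∧ dist x z < ε := by
  obtain ⟨δ₁, hδ₁, hstable⟩ := S.exists_mem_stableSet_of_forall_dist_zp_le
  have hl : 0 < 1 - S.lam0 := sub_pos.mpr S.lam0_lt_one
  set δ := min (δ₁ / 2) (min (S.eps0 / 2) ((1 - S.lam0) * ε / 2))
  have hδ₁' : δ < δ₁ := (min_le_left _ _).trans_lt (half_lt_self hδ₁)
  have hδe : δ ≤ S.eps0 / 2 := (min_le_right _ _).trans (min_le_left _ _)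
  have hδε : δ ≤ (1 - S.lam0) * ε / 2 := (min_le_right _ _).trans (min_le_right _ _)
  refine ⟨δ, lt_min (half_pos hδ₁) (lt_min (half_pos S.eps0_pos) (by positivity)),
    fun x hx => ?_⟩
  have h0 : dist x (S.zp p x) ≤ δ := by simpa [zp_zero, dist_comm] using hx 0
  obtain ⟨z, hz, hxz⟩ := S.exists_zp_eq_self_dist_le hp
    (hstable x _ (h0.trans_lt hδ₁') fun n => by rw [dist_comm]; exact (hx n).trans hδe)
  refine ⟨z, hz, hxz.trans_lt ?_⟩
  rw [div_lt_iff₀ hl]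
  nlinarith

variable {S}

theorem Irred.inv (hirr : S.Irred) : S.inv.Irred := by
  intro U V hU hV hUne hVne
  obtain ⟨K, _, ⟨x, hxV, rfl⟩, hKx⟩ := hirr V U hV hU hVne hUne
  exact ⟨K, x, ⟨S.zp K x, hKx, by rw [inv_zp, zp_neg_zp]⟩, hxV⟩

theorem swap_mem_Gs {a b : X} (h : (a, b) ∈ S.Gs) : (b, a) ∈ S.Gs := by
  simpa only [Gs, Set.mem_ofPred_eq, dist_comm] using h

theorem zp_mem_Gs {a b : X} (h : (a, b) ∈ S.Gs) (k : ℕ) : (S.zp k a, S.zp k b) ∈ S.Gs := by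
  have := h.comp (tendsto_add_atTop_nat k)
  simp only [Function.comp_def, Nat.cast_add, zp_add] at this
  exact this

theorem Irred.dense_setOf_zp_eq_self (hirr : S.Irred) {p : ℕ} (hp : 0 < p)
    (hne : (interior {x : X | (S.zp p x, x) ∈ S.Gs}).Nonempty) :
    Dense {z : X | S.zp p z = z} := by
  rw [Metric.dense_iff]
  intro y r hr
  obtain ⟨δ, hδ, hclose⟩ := S.exists_zp_eq_self_dist_lt_of_forall_dist_zp_le hp (half_pos hr)
  obtain ⟨V, hV, hVne, -, m, hm⟩ := exists_isOpen_subset_iInter_of_eventually_mem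
    (s := fun n => {x | dist (S.zp n (S.zp p x)) (S.zp n x) ≤ δ})
    (fun n => isClosed_le (((S.continuous_zp n).comp (S.continuous_zp p)).dist
      (S.continuous_zp n)) continuous_const) isOpen_interior hne fun x hx => by
      have hGs : (S.zp p x, x) ∈ S.Gs := interior_subset (s := {x | (S.zp p x, x) ∈ S.Gs}) hx
      exact hGs.eventually (eventually_le_nhds hδ)
  obtain ⟨K, -, ⟨-, ⟨w, hwV, rfl⟩, rfl⟩, hK⟩ :=
    hirr _ (ball y (r / 2)) (S.isOpenMap_zp m V hV) isOpen_ball (hVne.image _)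
      ⟨y, mem_ball_self (half_pos hr)⟩
  have hgood : ∀ n : ℕ,
      dist (S.zp n (S.zp p (S.zp K (S.zp m w)))) (S.zp n (S.zp K (S.zp m w))) ≤ δ := fun n => by
    have h := hm w hwV (n + K + m) (by omega)
    simp only [Set.mem_ofPred_eq, ← zp_add] at h ⊢
    convert h using 3 <;> push_cast <;> ring_nf
  obtain ⟨z, hz, hdist⟩ := hclose _ hgood
  refine ⟨z, ?_, hz⟩
  rw [mem_ball] at hK ⊢
  linarith [dist_triangle_left z y (S.zp K (S.zp m w))]

theorem Irred.interior_setOf_zp_mem_Gs_eq_empty [Infinite X] (hirr : S.Irred) {p : ℤ}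
    (hp : p ≠ 0) : interior {x : X | (S.zp p x, x) ∈ S.Gs} = ∅ := by
  suffices ∀ n : ℕ, 0 < n → interior {x : X | (S.zp n x, x) ∈ S.Gs} = ∅ by
    obtain ⟨n, rfl | rfl⟩ := Int.eq_nat_or_neg p
    · exact this n (by omega)
    · refine Set.subset_empty_iff.mp ((this n (by omega)) ▸ interior_mono fun x hx => ?_)
      have h := swap_mem_Gs (zp_mem_Gs hx n)
      rwa [zp_zp_neg] at h
  intro n hn
  by_contra hne
  have hfix : IsClosed {z : X | S.zp n z = z} := isClosed_eq (S.continuous_zp n) continuous_id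
  have hdense := hirr.dense_setOf_zp_eq_self hn (Set.nonempty_iff_ne_empty.mpr hne)
  have huniv := hfix.closure_eq ▸ dense_iff_closure_eq.mp hdense
  have := S.finite_of_forall_zp_eq_self hn (Set.eq_univ_iff_forall.mp huniv)
  exact not_finite X

theorem Irred.interior_setOf_zp_mem_Gu_eq_empty [Infinite X] (hirr : S.Irred) {q : ℤ}
    (hq : q ≠ 0) : interior {x : X | (S.zp q x, x) ∈ S.Gu} = ∅ := by
  simpa only [inv_Gs, inv_zp, neg_neg] using
    hirr.inv.interior_setOf_zp_mem_Gs_eq_empty (neg_ne_zero.mpr hq)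

end SmaleSpace

/-- if a Smale space `(X,φ)` is irreducible and `X` is infinite, then
`(X,φ)` is `(s,u)`-essentially free: for every `(p,q) ∈ ℤ²` with `(p,q) ≠ (0,0)`,
the interior of `{x ∈ X : (φ^p(x), x) ∈ G_φ^s and (φ^q(x), x) ∈ G_φ^u}` is empty. -/
theorem su_essentially_free_of_irreducible {X : Type*} [MetricSpace X]
    [CompactSpace X] (S : SmaleSpace X) (hirr : S.Irred) (hinf : Infinite X) :
    ∀ p q : ℤ, (p, q) ≠ (0, 0) →
      interior {x : X | (S.zp p x, x) ∈ S.Gs ∧ (S.zp q x, x) ∈ S.Gu} = ∅ := by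
  intro p q hpq
  rcases eq_or_ne p 0 with rfl | hp
  · have hq : q ≠ 0 := by rintro rfl; exact hpq rfl
    exact Set.subset_empty_iff.mp
      (hirr.interior_setOf_zp_mem_Gu_eq_empty hq ▸ interior_mono fun x hx => hx.2)
  · exact Set.subset_empty_iff.mp
      (hirr.interior_setOf_zp_mem_Gs_eq_empty hp ▸ interior_mono fun x hx => hx.1)
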